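/- For every Mockingbird term t, the equivalence class {t' : t ≡ t'} is a finite set. -/

import Mathlib

/-- Mockingbird terms: the constant `M`, variables `x i`, and applications. -/
inductive MTerm : Type
  | M : MTerm
  | var : ℕ → MTerm
  | app : MTerm → MTerm → MTerm
  deriving DecidableEq

/-- The one-step rewrite relation `⇒` on Mockingbird terms. -/
inductive Step : MTerm → MTerm → Prop
  | mock (t : MTerm) : Step (MTerm.app MTerm.M t) (MTerm.app t t)
  | left {t1 t1' : MTerm} (t2 : MTerm) :
      Step t1 t1' → Step (MTerm.app t1 t2) (MTerm.app t1' t2)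
  | right (t1 : MTerm) {t2 t2' : MTerm} :
      Step t2 t2' → Step (MTerm.app t1 t2) (MTerm.app t1 t2')

/-- `≼`, the reflexive-transitive closure of `⇒`. -/
def MLe : MTerm → MTerm → Prop := Relation.ReflTransGen Step

/-- `≡`, the reflexive-symmetric-transitive closure of `⇒`. -/
def MEquiv : MTerm → MTerm → Prop := Relation.EqvGen Step

/-- Strict version of `≼`. -/
def MLt (s t : MTerm) : Prop := MLe s t ∧ s ≠ t

/-- Covering relation for `≼`. -/
def MCovBy (s t : MTerm) : Prop := MLt s t ∧ ∀ z, MLt s z → ¬ MLt z t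

/-- Duplicative trees: white or black nodes with a list (forest) of children. -/
inductive DTree : Type
  | W : List DTree → DTree
  | B : List DTree → DTree

/-- The one-step relation `⋖` on duplicative forests. -/
inductive DStep : List DTree → List DTree → Prop
  | dup (g : List DTree) : DStep [DTree.W g] [DTree.B (g ++ g)]
  | white {g g' : List DTree} : DStep g g' → DStep [DTree.W g] [DTree.W g']
  | black {g g' : List DTree} : DStep g g' → DStep [DTree.B g] [DTree.B g']
  | head {t t' : DTree} (f : List DTree) : DStep [t] [t'] → DStep (t :: f) (t' :: f)
  | tail (t : DTree) {f f' : List DTree} : DStep f f' → DStep (t :: f) (t :: f')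

/-- `≪`, the reflexive-transitive closure of `⋖`. -/
def DLe : List DTree → List DTree → Prop := Relation.ReflTransGen DStep

/-- The map `fr` from Mockingbird terms to duplicative forests. -/
def fr : MTerm → List DTree
  | MTerm.M => []
  | MTerm.var _ => []
  | MTerm.app MTerm.M MTerm.M => [DTree.B []]
  | MTerm.app MTerm.M t' => [DTree.W (fr t')]
  | MTerm.app t t' => [DTree.B (fr t ++ fr t')]

mutual
  /-- The pruning map on duplicative trees (returns a forest). -/
  def prT : DTree → List DTree
    | DTree.W g => [DTree.W (prF g)]
    | DTree.B g => prF g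
  /-- The pruning map on duplicative forests. -/
  def prF : List DTree → List DTree
    | [] => []
    | t :: f => prT t ++ prF f
end

mutual
  /-- The statistic `mtStat` on duplicative trees. -/
  def mtStat : DTree → ℕ
    | DTree.W g => 2 * ml g
    | DTree.B g => ml g
  /-- Sum of `mtStat` over the trees of a forest. -/
  def mtsum : List DTree → ℕ
    | [] => 0
    | t :: f => mtStat t + mtsum f
  /-- The statistic `ml` on duplicative forests: `1 - ℓ + Σ mtStat`. -/
  def ml : List DTree → ℕ
    | f => mtsum f + 1 - f.length
end

mutual
  /-- Number of white nodes in a duplicative tree. -/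
  def whitesT : DTree → ℕ
    | DTree.W g => 1 + whitesF g
    | DTree.B g => whitesF g
  /-- Number of white nodes in a duplicative forest. -/
  def whitesF : List DTree → ℕ
    | [] => 0
    | t :: f => whitesT t + whitesF f
end

/-- Closed terms: no variables. -/
def MClosed : MTerm → Prop
  | MTerm.M => True
  | MTerm.var _ => False
  | MTerm.app a b => MClosed a ∧ MClosed b

/-- Degree: number of applications. -/
def deg : MTerm → ℕ
  | MTerm.M => 0
  | MTerm.var _ => 0
  | MTerm.app a b => deg a + deg b + 1

/-- Subterm relation. -/
inductive Subterm : MTerm → MTerm → Prop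
  | refl (t : MTerm) : Subterm t t
  | left {s a : MTerm} (b : MTerm) : Subterm s a → Subterm s (MTerm.app a b)
  | right (a : MTerm) {s b : MTerm} : Subterm s b → Subterm s (MTerm.app a b)

/-- The term `r_d`. -/
def rTerm : ℕ → MTerm
  | 0 => MTerm.M
  | d + 1 => MTerm.app MTerm.M (rTerm d)

/-- Saturated chain from `a` to `b`, given as the list of its elements. -/
def SatChain (a b : MTerm) (c : List MTerm) : Prop :=
  List.Chain' MCovBy c ∧ c.head? = some a ∧ c.getLast? = some b


section Aux

open MTerm

/-! ### Size and variable set, invariants of rewriting -/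

/-- Size of a term (number of atoms). -/
def msize : MTerm → ℕ
  | MTerm.M => 1
  | MTerm.var _ => 1
  | MTerm.app a b => msize a + msize b

lemma one_le_msize (t : MTerm) : 1 ≤ msize t := by
  induction t with
  | M => simp [msize]
  | var i => simp [msize]
  | app a b ha hb => simp [msize]; omega

/-- The set of variables of a term. -/
def vset : MTerm → Finset ℕ
  | MTerm.M => ∅
  | MTerm.var i => {i}
  | MTerm.app a b => vset a ∪ vset b

lemma step_msize {u v : MTerm} (h : Step u v) : msize u ≤ msize v := by
  induction h with
  | mock t => have := one_le_msize t; simp [msize]; omega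
  | left t2 h ih => simp [msize]; omega
  | right t1 h ih => simp [msize]; omega

lemma step_vset {u v : MTerm} (h : Step u v) : vset u = vset v := by
  induction h with
  | mock t => simp [vset]
  | left t2 h ih => simp [vset, ih]
  | right t1 h ih => simp [vset, ih]

lemma mle_msize {u v : MTerm} (h : MLe u v) : msize u ≤ msize v := by
  induction h with
  | refl => exact le_rfl
  | tail _ hstep ih => exact ih.trans (step_msize hstep)

lemma mle_vset {u v : MTerm} (h : MLe u v) : vset u = vset v := by
  induction h with
  | refl => rfl
  | tail _ hstep ih => exact ih.trans (step_vset hstep)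

/-! ### Terms of bounded size and variables form a finite set -/

lemma bounded_finite : ∀ (n : ℕ) (F : Finset ℕ),
    {u : MTerm | msize u ≤ n ∧ vset u ⊆ F}.Finite := by
  intro n
  induction n with
  | zero =>
    intro F
    convert Set.finite_empty
    ext u
    simp only [Set.mem_setOf_eq, Set.mem_empty_iff_false, iff_false, not_and]
    intro h
    exact absurd h (by have := one_le_msize u; omega)
  | succ n ih =>
    intro F
    have hsub : {u : MTerm | msize u ≤ n + 1 ∧ vset u ⊆ F} ⊆
        ({MTerm.M} : Set MTerm) ∪ (MTerm.var '' F) ∪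
        ((fun p : MTerm × MTerm => MTerm.app p.1 p.2) ''
          ({u : MTerm | msize u ≤ n ∧ vset u ⊆ F} ×ˢ {u : MTerm | msize u ≤ n ∧ vset u ⊆ F})) := by
      rintro u ⟨hs, hv⟩
      match u with
      | MTerm.M => exact Or.inl (Or.inl rfl)
      | MTerm.var i =>
        refine Or.inl (Or.inr ⟨i, ?_, rfl⟩)
        have : i ∈ vset (MTerm.var i) := by simp [vset]
        exact hv this
      | MTerm.app a b =>
        have h1 : msize a ≤ n := by have := one_le_msize b; simp [msize] at hs; omega
        have h2 : msize b ≤ n := by have := one_le_msize a; simp [msize] at hs; omega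
        have hv1 : vset a ⊆ F := fun i hi => hv (by simp [vset]; exact Or.inl hi)
        have hv2 : vset b ⊆ F := fun i hi => hv (by simp [vset]; exact Or.inr hi)
        exact Or.inr ⟨(a, b), ⟨⟨h1, hv1⟩, h2, hv2⟩, rfl⟩
    refine Set.Finite.subset ?_ hsub
    refine (((Set.finite_singleton _).union ((F.finite_toSet).image _)).union
      (((ih F).prod (ih F)).image _))

/-- The set of terms rewriting TO a fixed term is finite. -/
lemma anc_finite (s : MTerm) : {u : MTerm | MLe u s}.Finite := by
  refine Set.Finite.subset (bounded_finite (msize s) (vset s)) ?_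
  rintro u hu
  exact ⟨mle_msize hu, by rw [mle_vset hu]⟩

/-! ### Forward reachable sets are finite -/

lemma mle_M {s : MTerm} (h : MLe MTerm.M s) : s = MTerm.M := by
  induction h with
  | refl => rfl
  | tail _ hstep ih => subst ih; exact absurd hstep (by intro h; cases h)

lemma mle_var {i : ℕ} {s : MTerm} (h : MLe (MTerm.var i) s) : s = MTerm.var i := by
  induction h with
  | refl => rfl
  | tail _ hstep ih => subst ih; exact absurd hstep (by intro h; cases h)

lemma mle_closed {S : Set MTerm} (hS : ∀ u ∈ S, ∀ v, Step u v → v ∈ S)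
    {t s : MTerm} (h : MLe t s) (ht : t ∈ S) : s ∈ S := by
  induction h with
  | refl => exact ht
  | tail h1 hstep ih => exact hS _ ih _ hstep

lemma reach_finite (t : MTerm) : {s : MTerm | MLe t s}.Finite := by
  induction t with
  | M =>
    refine Set.Finite.subset (Set.finite_singleton MTerm.M) ?_
    intro s hs; exact mle_M hs
  | var i =>
    refine Set.Finite.subset (Set.finite_singleton (MTerm.var i)) ?_
    intro s hs; exact mle_var hs
  | app a b iha ihb =>
    set Ra := {s : MTerm | MLe a s}
    set Rb := {s : MTerm | MLe b s}
    set S : Set MTerm :=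
      ((fun p : MTerm × MTerm => MTerm.app p.1 p.2) '' (Ra ×ˢ Rb)) ∪
      ((fun p : MTerm × MTerm => MTerm.app p.1 p.2) '' (Rb ×ˢ Rb)) with hSdef
    have hclosed : ∀ u ∈ S, ∀ v, Step u v → v ∈ S := by
      rintro u hu v hv
      rcases hu with ⟨⟨p1, p2⟩, ⟨hp1, hp2⟩, rfl⟩ | ⟨⟨p1, p2⟩, ⟨hp1, hp2⟩, rfl⟩
      · cases hv with
        | mock _ => exact Or.inr ⟨(p2, p2), ⟨hp2, hp2⟩, rfl⟩
        | left _ h =>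
          rename_i w; exact Or.inl ⟨(w, p2), ⟨hp1.tail h, hp2⟩, rfl⟩
        | right _ h =>
          rename_i w; exact Or.inl ⟨(p1, w), ⟨hp1, hp2.tail h⟩, rfl⟩
      · cases hv with
        | mock _ => exact Or.inr ⟨(p2, p2), ⟨hp2, hp2⟩, rfl⟩
        | left _ h =>
          rename_i w; exact Or.inr ⟨(w, p2), ⟨hp1.tail h, hp2⟩, rfl⟩
        | right _ h =>
          rename_i w; exact Or.inr ⟨(p1, w), ⟨hp1, hp2.tail h⟩, rfl⟩
    have hstart : MTerm.app a b ∈ S :=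
      Or.inl ⟨(a, b), ⟨Relation.ReflTransGen.refl, Relation.ReflTransGen.refl⟩, rfl⟩
    have hsub : {s : MTerm | MLe (MTerm.app a b) s} ⊆ S := by
      intro s hs; exact mle_closed hclosed hs hstart
    refine Set.Finite.subset ?_ hsub
    exact ((iha.prod ihb).image _).union ((ihb.prod ihb).image _)

/-! ### Confluence via parallel reduction -/

/-- Parallel reduction. -/
inductive Par : MTerm → MTerm → Prop
  | M : Par MTerm.M MTerm.M
  | var (i : ℕ) : Par (MTerm.var i) (MTerm.var i)
  | app {a a' b b' : MTerm} : Par a a' → Par b b' → Par (MTerm.app a b) (MTerm.app a' b')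
  | mock {t t' : MTerm} : Par t t' → Par (MTerm.app MTerm.M t) (MTerm.app t' t')

lemma par_refl (t : MTerm) : Par t t := by
  induction t with
  | M => exact Par.M
  | var i => exact Par.var i
  | app a b ha hb => exact Par.app ha hb

lemma step_par {u v : MTerm} (h : Step u v) : Par u v := by
  induction h with
  | mock t => exact Par.mock (par_refl t)
  | left t2 h ih => exact Par.app ih (par_refl t2)
  | right t1 h ih => exact Par.app (par_refl t1) ih

lemma mle_app {a a' b b' : MTerm} (ha : MLe a a') (hb : MLe b b') :
    MLe (MTerm.app a b) (MTerm.app a' b') := by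
  have h1 : MLe (MTerm.app a b) (MTerm.app a' b) :=
    Relation.ReflTransGen.lift (fun x => MTerm.app x b) (fun x y h => Step.left b h) _ _ ha
  have h2 : MLe (MTerm.app a' b) (MTerm.app a' b') :=
    Relation.ReflTransGen.lift (fun x => MTerm.app a' x) (fun x y h => Step.right a' h) _ _ hb
  exact h1.trans h2

lemma par_mle {u v : MTerm} (h : Par u v) : MLe u v := by
  induction h with
  | M => exact Relation.ReflTransGen.refl
  | var i => exact Relation.ReflTransGen.refl
  | app ha hb iha ihb => exact mle_app iha ihb
  | mock h ih =>
    exact (mle_app (Relation.ReflTransGen.refl) ih).tail (Step.mock _)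

lemma par_M_inv {c : MTerm} (h : Par MTerm.M c) : c = MTerm.M := by
  cases h; rfl

lemma par_diamond {a b c : MTerm} (hab : Par a b) (hac : Par a c) :
    ∃ d, Par b d ∧ Par c d := by
  induction hab generalizing c with
  | M => cases hac; exact ⟨MTerm.M, Par.M, Par.M⟩
  | var i => cases hac; exact ⟨MTerm.var i, Par.var i, Par.var i⟩
  | @app a a' b b' h1 h2 ih1 ih2 =>
    cases hac with
    | app g1 g2 =>
      obtain ⟨d1, hb1, hc1⟩ := ih1 g1
      obtain ⟨d2, hb2, hc2⟩ := ih2 g2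
      exact ⟨MTerm.app d1 d2, Par.app hb1 hb2, Par.app hc1 hc2⟩
    | mock g =>
      have hM : a' = MTerm.M := par_M_inv h1
      subst hM
      obtain ⟨d2, hb2, hc2⟩ := ih2 g
      exact ⟨MTerm.app d2 d2, Par.mock hb2, Par.app hc2 hc2⟩
  | @mock t t' h ih =>
    cases hac with
    | app g1 g2 =>
      have hM : _ = MTerm.M := par_M_inv g1
      subst hM
      obtain ⟨d, hb, hc⟩ := ih g2
      exact ⟨MTerm.app d d, Par.app hb hb, Par.mock hc⟩
    | mock g =>
      obtain ⟨d, hb, hc⟩ := ih g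
      exact ⟨MTerm.app d d, Par.app hb hb, Par.app hc hc⟩

lemma rtg_par_mle {u v : MTerm} (h : Relation.ReflTransGen Par u v) : MLe u v := by
  induction h with
  | refl => exact Relation.ReflTransGen.refl
  | tail h1 hp ih => exact ih.trans (par_mle hp)

lemma mequiv_join {t t' : MTerm} (h : MEquiv t t') : ∃ s, MLe t s ∧ MLe t' s := by
  have hdia : ∀ a b c : MTerm, Par a b → Par a c →
      ∃ d, Relation.ReflGen Par b d ∧ Relation.ReflTransGen Par c d := by
    intro a b c hab hac
    obtain ⟨d, hb, hc⟩ := par_diamond hab hac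
    exact ⟨d, Relation.ReflGen.single hb, Relation.ReflTransGen.single hc⟩
  have hpar : Relation.EqvGen Par t t' :=
    Relation.EqvGen.mono (fun a b hab => step_par hab) _ _ h
  have hpar2 : Relation.EqvGen (Relation.Join (Relation.ReflTransGen Par)) t t' :=
    Relation.EqvGen.mono
      (fun a b hab => ⟨b, Relation.ReflTransGen.single hab, Relation.ReflTransGen.refl⟩) _ _ hpar
  have hjoin : Relation.Join (Relation.ReflTransGen Par) t t' :=
    (Relation.equivalence_join_reflTransGen hdia).eqvGen_iff.mp hpar2
  obtain ⟨s, h1, h2⟩ := hjoin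
  exact ⟨s, rtg_par_mle h1, rtg_par_mle h2⟩

end Aux

/-- for every Mockingbird term `t`, the `≡`-equivalence class of `t` is a
finite set. -/
theorem mockingbird_equiv_class_finite (t : MTerm) :
    {t' : MTerm | MEquiv t t'}.Finite := by
  have hsub : {t' : MTerm | MEquiv t t'} ⊆ ⋃ s ∈ {s : MTerm | MLe t s}, {u : MTerm | MLe u s} := by
    intro t' ht'
    obtain ⟨s, h1, h2⟩ := mequiv_join ht'
    exact Set.mem_biUnion h1 h2
  exact Set.Finite.subset ((reach_finite t).biUnion fun s _ => anc_finite s) hsub
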